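/- arXiv:1612.06813 — 4 statements merged into one kernel-verified Lean document; each statement's English description precedes it below -/
import Mathlib

section
/- Let u, v : Ω^h → ℝ be grid functions on a finite set Ω^h, and let F_ρ be a degenerate elliptic finite-difference scheme, i.e., F_ρ[u](x) = F_ρ(u(x), (u(x) - u(y))_{y}) is nondecreasing in each argument. If F_ρ[u](x) < F_ρ[v](x) for all x ∈ Ω^h, then u(x) ≤ v(x) for all x ∈ Ω^h. -/
/-- Discrete comparison principle for strict subsolutions of a degenerate
elliptic finite-difference scheme on a finite grid. -/
theorem stmt_9 (Ω : Type*) [Fintype Ω] [Nonempty Ω]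
    (k : Ω → ℕ) (y : (x : Ω) → Fin (k x) → Ω)
    (G : (x : Ω) → ℝ → (Fin (k x) → ℝ) → ℝ)
    (hmono : ∀ (x : Ω) (a a' : ℝ) (d d' : Fin (k x) → ℝ),
      a ≤ a' → (∀ i, d i ≤ d' i) → G x a d ≤ G x a' d')
    (u v : Ω → ℝ)
    (hstrict : ∀ x : Ω,
      G x (u x) (fun i => u x - u (y x i)) < G x (v x) (fun i => v x - v (y x i))) :
    ∀ x : Ω, u x ≤ v x := by
  obtain ⟨x₀, hx₀⟩ := Finite.exists_max (fun x => u x - v x)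
  intro x
  have hM : u x₀ - v x₀ ≤ 0 := by
    by_contra h
    push_neg at h
    have h1 : v x₀ ≤ u x₀ := by linarith
    have h2 : ∀ i, v x₀ - v (y x₀ i) ≤ u x₀ - u (y x₀ i) := by
      intro i
      have := hx₀ (y x₀ i)
      linarith
    have := hmono x₀ (v x₀) (u x₀) (fun i => v x₀ - v (y x₀ i))
      (fun i => u x₀ - u (y x₀ i)) h1 h2
    exact absurd (hstrict x₀) (not_lt.2 this)
  have := hx₀ x
  linarith
end

section
/- For ε > 0, the function u(x) = ε²|x - x₀| + ε³(exp(-|x - x₀|/ε) - 1) + u₀ is C¹ on ℝ, satisfies u(x₀) = u₀, u'(x₀) = 0, and solves ε u'' + |u'| = ε² classically away from x₀. -/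
/-- The explicit 1D solution u(x) = ε²|x-x₀| + ε³(e^{-|x-x₀|/ε} - 1) + u₀ is C¹,
has u(x₀) = u₀, u'(x₀) = 0, and solves ε u'' + |u'| = ε² away from x₀. -/
theorem stmt_11 (ε x₀ u₀ : ℝ) (hε : 0 < ε)
    (u : ℝ → ℝ)
    (hu : u = fun x => ε ^ 2 * |x - x₀| + ε ^ 3 * (Real.exp (-|x - x₀| / ε) - 1) + u₀) :
    ContDiff ℝ 1 u ∧ u x₀ = u₀ ∧ deriv u x₀ = 0 ∧
    ∀ x : ℝ, x ≠ x₀ → ε * deriv (deriv u) x + |deriv u x| = ε ^ 2 := by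
  have hεne : ε ≠ 0 := hε.ne'
  set v : ℝ → ℝ := fun x => if x₀ ≤ x then ε ^ 2 * (1 - Real.exp (-(x - x₀) / ε))
      else -(ε ^ 2 * (1 - Real.exp ((x - x₀) / ε))) with hv
  set up : ℝ → ℝ := fun x => ε ^ 2 * (x - x₀) + ε ^ 3 * (Real.exp (-(x - x₀) / ε) - 1) + u₀
    with hup
  set um : ℝ → ℝ := fun x => ε ^ 2 * -(x - x₀) + ε ^ 3 * (Real.exp ((x - x₀) / ε) - 1) + u₀
    with hum
  have hplus : ∀ x : ℝ, HasDerivAt up (ε ^ 2 * (1 - Real.exp (-(x - x₀) / ε))) x := by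
    intro x
    have h1 : HasDerivAt (fun x : ℝ => -(x - x₀) / ε) (-1 / ε) x := by
      simpa using (((hasDerivAt_id x).sub_const x₀).neg.div_const ε)
    have h2 := (h1.exp.sub_const 1).const_mul (ε ^ 3)
    have h3 := ((((hasDerivAt_id x).sub_const x₀).const_mul (ε ^ 2)).add h2).add_const u₀
    convert h3 using 1
    rfl
    rfl
    rfl
    field_simp
    ring
  have hminus : ∀ x : ℝ, HasDerivAt um (-(ε ^ 2 * (1 - Real.exp ((x - x₀) / ε)))) x := by
    intro x
    have h1 : HasDerivAt (fun x : ℝ => (x - x₀) / ε) (1 / ε) x := by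
      simpa using (((hasDerivAt_id x).sub_const x₀).div_const ε)
    have h2 := (h1.exp.sub_const 1).const_mul (ε ^ 3)
    have h3 := ((((hasDerivAt_id x).sub_const x₀).neg.const_mul (ε ^ 2)).add h2).add_const u₀
    convert h3 using 1
    rfl
    rfl
    rfl
    field_simp
    ring
  have hequp : Set.EqOn u up (Set.Ici x₀) := by
    intro y hy
    simp only [hu, hup, abs_of_nonneg (sub_nonneg.mpr (Set.mem_Ici.mp hy))]
  have hequm : Set.EqOn u um (Set.Iic x₀) := by
    intro y hy
    have : |y - x₀| = -(y - x₀) := abs_of_nonpos (sub_nonpos.mpr (hy : y ≤ x₀))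
    simp only [hu, hum, this, neg_neg]
  have key : ∀ x, HasDerivAt u (v x) x := by
    intro x
    have hIci : HasDerivWithinAt u (v x) (Set.Ici x₀) x := by
      rcases le_or_gt x₀ x with h | h
      · have := ((hplus x).hasDerivWithinAt (s := Set.Ici x₀)).congr hequp (hequp h)
        simpa [hv, if_pos h] using this
      · exact HasFDerivWithinAt.of_notMem_closure (by simpa using not_le.mpr h)
    have hIic : HasDerivWithinAt u (v x) (Set.Iic x₀) x := by
      rcases lt_or_ge x₀ x with h | h
      · exact HasFDerivWithinAt.of_notMem_closure (by simpa using not_le.mpr h)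
      · have := ((hminus x).hasDerivWithinAt (s := Set.Iic x₀)).congr hequm (hequm h)
        rcases eq_or_lt_of_le h with heq | hlt
        · subst heq
          simpa [hv] using this
        · simpa [hv, not_le.mpr hlt] using this
    have huniv : Set.Ici x₀ ∪ Set.Iic x₀ = Set.univ := by
      ext y; simpa using le_total x₀ y
    have := hIci.union hIic
    rw [huniv, hasDerivWithinAt_univ] at this
    exact this
  have hderiv : deriv u = v := funext fun x => (key x).deriv
  have hvcont : Continuous v := by
    apply Continuous.if_le
    · fun_prop
    · fun_prop
    · exact continuous_const
    · exact continuous_id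
    · intro x hx
      simp [← hx]
  refine ⟨?_, ?_, ?_, ?_⟩
  · exact contDiff_one_iff_deriv.mpr ⟨fun x => (key x).differentiableAt, hderiv ▸ hvcont⟩
  · simp [hu]
  · rw [hderiv]; simp [hv]
  · intro x hx
    rw [hderiv]
    rcases hx.lt_or_gt with h | h
    · -- x < x₀
      have hev : v =ᶠ[nhds x] (fun y => -(ε ^ 2 * (1 - Real.exp ((y - x₀) / ε)))) := by
        filter_upwards [Iio_mem_nhds h] with y hy
        simp [hv, not_le.mpr (by exact hy : y < x₀)]
      have hb : HasDerivAt (fun y => -(ε ^ 2 * (1 - Real.exp ((y - x₀) / ε))))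
          (ε * Real.exp ((x - x₀) / ε)) x := by
        have h1 : HasDerivAt (fun y : ℝ => (y - x₀) / ε) (1 / ε) x := by
          simpa using (((hasDerivAt_id x).sub_const x₀).div_const ε)
        have h2 := (((hasDerivAt_const x (1:ℝ)).sub h1.exp).const_mul (ε ^ 2)).neg
        convert h2 using 1
        rfl
        rfl
        rfl
        field_simp
        ring
      have hdv : deriv v x = ε * Real.exp ((x - x₀) / ε) :=
        (hb.congr_of_eventuallyEq hev).deriv
      have hexp : Real.exp ((x - x₀) / ε) ≤ 1 := by
        rw [Real.exp_le_one_iff]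
        exact div_nonpos_of_nonpos_of_nonneg (by linarith) hε.le
      have habs : |v x| = ε ^ 2 * (1 - Real.exp ((x - x₀) / ε)) := by
        rw [hv]
        simp only [not_le.mpr h, if_neg, if_false]
        rw [abs_neg, abs_of_nonneg (by nlinarith)]
      rw [hdv, habs]
      ring
    · -- x₀ < x
      have hev : v =ᶠ[nhds x] (fun y => ε ^ 2 * (1 - Real.exp (-(y - x₀) / ε))) := by
        filter_upwards [Ioi_mem_nhds h] with y hy
        simp [hv, le_of_lt (by exact hy : x₀ < y)]
      have hb : HasDerivAt (fun y => ε ^ 2 * (1 - Real.exp (-(y - x₀) / ε)))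
          (ε * Real.exp (-(x - x₀) / ε)) x := by
        have h1 : HasDerivAt (fun y : ℝ => -(y - x₀) / ε) (-1 / ε) x := by
          simpa using (((hasDerivAt_id x).sub_const x₀).neg.div_const ε)
        have h2 := ((hasDerivAt_const x (1:ℝ)).sub h1.exp).const_mul (ε ^ 2)
        convert h2 using 1
        rfl
        rfl
        rfl
        field_simp
        ring
      have hdv : deriv v x = ε * Real.exp (-(x - x₀) / ε) :=
        (hb.congr_of_eventuallyEq hev).deriv
      have hexp : Real.exp (-(x - x₀) / ε) ≤ 1 := by
        rw [Real.exp_le_one_iff]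
        exact div_nonpos_of_nonpos_of_nonneg (by linarith) hε.le
      have habs : |v x| = ε ^ 2 * (1 - Real.exp (-(x - x₀) / ε)) := by
        rw [hv]
        simp only [if_pos h.le]
        rw [abs_of_nonneg (by nlinarith)]
      rw [hdv, habs]
      ring
end

section
/- Let u ∈ C²(Ω) on a convex open set Ω ⊂ ℝⁿ satisfy: for every x ∈ Ω and every unit vector v with ∇u(x)·v = 0, one has vᵀD²u(x)v ≥ ε > 0. If x, y ∈ Ω with u(x) = u(y) = α and x̄ = (x+y)/2 satisfies ∇u(x̄)·(x−y) = 0, then u(x̄) ≤ α − (ε h²)/2 + O(h⁴), where h = |x−y|/2. -/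
open RealInnerProductSpace
open Set

section Aux

variable {E F : Type*} [NormedAddCommGroup E] [NormedSpace ℝ E]
  [NormedAddCommGroup F] [NormedSpace ℝ F]

lemma aux_iteratedFDeriv_shift {f : E → F} (hf : ContDiff ℝ 4 f) (c : E) :
    ∀ i : ℕ, i ≤ 4 →
    iteratedFDeriv ℝ i (fun z => f (c + z)) = fun z => iteratedFDeriv ℝ i f (c + z) := by
  intro i
  induction i with
  | zero =>
    intro _
    funext z; ext m; simp [iteratedFDeriv_zero_apply]
  | succ k IH =>
    intro hk
    have hk' : k ≤ 4 := Nat.le_of_succ_le hk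
    funext z; ext m
    have hg : Differentiable ℝ (iteratedFDeriv ℝ k f) :=
      hf.differentiable_iteratedFDeriv (by exact_mod_cast Nat.lt_of_succ_le hk)
    have h2 : HasFDerivAt (fun z : E => c + z) (ContinuousLinearMap.id ℝ E) z :=
      (hasFDerivAt_id z).const_add c
    have h3 : HasFDerivAt (fun z => iteratedFDeriv ℝ k f (c + z))
        (fderiv ℝ (iteratedFDeriv ℝ k f) (c + z)) z := by
      have h3' := ((hg (c + z)).hasFDerivAt).comp z h2
      rw [ContinuousLinearMap.comp_id] at h3'
      exact h3'
    rw [iteratedFDeriv_succ_apply_left, iteratedFDeriv_succ_apply_left,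
      IH hk', h3.fderiv]

lemma aux_iteratedDeriv_line {u : E → ℝ} (hu : ContDiff ℝ 4 u) (c w : E) {i : ℕ}
    (hi : i ≤ 4) (t : ℝ) :
    iteratedDeriv i (fun s : ℝ => u (c + s • w)) t
      = iteratedFDeriv ℝ i u (c + t • w) (fun _ => w) := by
  set A : ℝ →L[ℝ] E := ContinuousLinearMap.smulRight (1 : ℝ →L[ℝ] ℝ) w with hA
  have hAe : ∀ s : ℝ, A s = s • w := by intro s; simp [hA]
  have hshift : ContDiff ℝ 4 (fun z => u (c + z)) :=
    hu.comp (contDiff_const.add contDiff_id)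
  have hcomp : (fun s : ℝ => u (c + s • w)) = (fun z => u (c + z)) ∘ A := by
    funext s; simp [hAe]
  rw [iteratedDeriv_eq_iteratedFDeriv, hcomp,
    ContinuousLinearMap.iteratedFDeriv_comp_right A hshift t (by exact_mod_cast hi)]
  rw [ContinuousMultilinearMap.compContinuousLinearMap_apply]
  rw [aux_iteratedFDeriv_shift hu c i hi]
  simp [hAe]

lemma aux_iteratedDerivWithin {f : ℝ → ℝ} (hf : ContDiff ℝ 4 f) {a b : ℝ} (hab : a < b)
    {i : ℕ} (hi : i ≤ 4) {t : ℝ} (ht : t ∈ Icc a b) :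
    iteratedDerivWithin i f (Icc a b) t = iteratedDeriv i f t := by
  have H := ((contDiff_iff_ftaylorSeries (n := 4)).mp
    (by exact_mod_cast hf)).hasFTaylorSeriesUpToOn (Icc a b)
  have h2 := H.eq_iteratedFDerivWithin_of_uniqueDiffOn (m := i)
    (by exact_mod_cast hi) (uniqueDiffOn_Icc hab) ht
  rw [iteratedDerivWithin_eq_iteratedFDerivWithin, ← h2, iteratedDeriv_eq_iteratedFDeriv]
  rfl

lemma aux_line_bound {u : E → ℝ} (hu : ContDiff ℝ 4 u) (c w : E) (M : ℝ)
    (hM : ∀ t ∈ Icc (0:ℝ) 1, ‖iteratedFDeriv ℝ 4 u (c + t • w)‖ ≤ M) :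
    |u (c + w) - (u c + iteratedFDeriv ℝ 1 u c (fun _ => w)
        + (1/2) * iteratedFDeriv ℝ 2 u c (fun _ => w)
        + (1/6) * iteratedFDeriv ℝ 3 u c (fun _ => w))| ≤ M * ‖w‖^4 / 6 := by
  set φ := fun t : ℝ => u (c + t • w) with hφdef
  have hφ : ContDiff ℝ 4 φ := hu.comp (contDiff_const.add (contDiff_id.smul contDiff_const))
  have hb : ∀ s ∈ Icc (0:ℝ) 1, ‖iteratedDerivWithin 4 φ (Icc (0:ℝ) 1) s‖ ≤ M * ‖w‖^4 := by
    intro s hs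
    rw [aux_iteratedDerivWithin hφ one_pos le_rfl hs,
      aux_iteratedDeriv_line hu c w le_rfl s]
    calc ‖iteratedFDeriv ℝ 4 u (c + s • w) (fun _ => w)‖
        ≤ ‖iteratedFDeriv ℝ 4 u (c + s • w)‖ * ∏ _i : Fin 4, ‖w‖ :=
          ContinuousMultilinearMap.le_opNorm _ _
      _ ≤ M * ‖w‖^4 := by
          rw [Finset.prod_const, Finset.card_univ, Fintype.card_fin]
          gcongr
          exact hM s hs
  have B := taylor_mean_remainder_bound (n := 3) (zero_le_one)
    (by exact_mod_cast hφ.contDiffOn) (right_mem_Icc.mpr zero_le_one) hb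
  have key : ∀ k : ℕ, k ≤ 4 → iteratedDerivWithin k φ (Icc (0:ℝ) 1) 0
      = iteratedFDeriv ℝ k u c (fun _ => w) := by
    intro k hk
    rw [aux_iteratedDerivWithin hφ one_pos hk (left_mem_Icc.mpr zero_le_one),
      aux_iteratedDeriv_line hu c w hk 0]
    simp
  rw [taylor_within_apply] at B
  rw [Finset.sum_range_succ, Finset.sum_range_succ, Finset.sum_range_succ,
    Finset.sum_range_one] at B
  rw [key 0 (by norm_num), key 1 (by norm_num), key 2 (by norm_num), key 3 (by norm_num)] at B
  have hφ1 : φ 1 = u (c + w) := by simp [hφdef]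
  have h0 : iteratedFDeriv ℝ 0 u c (fun _ => w) = u c := by
    simp [iteratedFDeriv_zero_apply]
  rw [hφ1, h0] at B
  simp only [Nat.factorial, smul_eq_mul] at B
  rw [Real.norm_eq_abs] at B
  convert B using 2
  · ring
  · norm_num
  · norm_num [Nat.succ_eq_add_one]

end Aux

/-- Uniform convexity estimate at the midpoint: if every unit tangent direction
has second derivative at least ε, and the gradient at the midpoint x̄ of x,y is
orthogonal to x−y, then u(x̄) ≤ α − ε h²/2 + O(h⁴), h = |x−y|/2. -/
theorem stmt_14 (n : ℕ) (Ω : Set (EuclideanSpace ℝ (Fin n)))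
    (hΩo : IsOpen Ω) (hΩc : Convex ℝ Ω)
    (u : EuclideanSpace ℝ (Fin n) → ℝ) (hu : ContDiff ℝ 4 u)
    (K : ℝ) (hK : ∀ z ∈ Ω, ‖iteratedFDeriv ℝ 4 u z‖ ≤ K)
    (ε : ℝ) (hε : 0 < ε)
    (hell : ∀ x ∈ Ω, ∀ v : EuclideanSpace ℝ (Fin n), ‖v‖ = 1 →
      ⟪gradient u x, v⟫ = 0 → ε ≤ iteratedFDeriv ℝ 2 u x ![v, v]) :
    ∃ C : ℝ, ∀ α : ℝ, ∀ x ∈ Ω, ∀ y ∈ Ω, u x = α → u y = α →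
      ⟪gradient u ((1 / 2 : ℝ) • (x + y)), x - y⟫ = 0 →
      u ((1 / 2 : ℝ) • (x + y)) ≤
        α - ε * (‖x - y‖ / 2) ^ 2 / 2 + C * (‖x - y‖ / 2) ^ 4 := by
  refine ⟨K / 6, ?_⟩
  intro α x hx y hy hux huy hperp
  by_cases hxy : x = y
  · subst hxy
    have hmid : (1 / 2 : ℝ) • (x + x) = x := by module
    rw [hmid, hux]
    simp
  · set c := (1 / 2 : ℝ) • (x + y) with hc
    set w := (1 / 2 : ℝ) • (x - y) with hwdef
    have hw0 : w ≠ 0 := by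
      simp only [hwdef, smul_ne_zero_iff, sub_ne_zero]
      exact ⟨by norm_num, hxy⟩
    have hcw : c + w = x := by rw [hc, hwdef]; module
    have hcw' : c + (-w) = y := by rw [hc, hwdef]; module
    have hnw : ‖w‖ = ‖x - y‖ / 2 := by
      rw [hwdef, norm_smul]
      simp [abs_of_nonneg]
      ring
    have hmem : ∀ t ∈ Icc (0:ℝ) 1, c + t • w ∈ Ω ∧ c + t • (-w) ∈ Ω := by
      intro t ht
      obtain ⟨ht0, ht1⟩ := ht
      constructor
      · have h1 : c + t • w = ((1+t)/2) • x + ((1-t)/2) • y := by rw [hc, hwdef]; module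
        rw [h1]
        exact hΩc hx hy (by linarith) (by linarith) (by ring)
      · have h1 : c + t • (-w) = ((1-t)/2) • x + ((1+t)/2) • y := by rw [hc, hwdef]; module
        rw [h1]
        exact hΩc hx hy (by linarith) (by linarith) (by ring)
    have B1 := aux_line_bound hu c w K (fun t ht => hK _ (hmem t ht).1)
    have B2 := aux_line_bound hu c (-w) K (fun t ht => hK _ (hmem t ht).2)
    have hneg : ∀ k : ℕ, iteratedFDeriv ℝ k u c (fun _ => -w)
        = (-1:ℝ)^k * iteratedFDeriv ℝ k u c (fun _ => w) := by
      intro k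
      have h := (iteratedFDeriv ℝ k u c).map_smul_univ (fun _ => (-1:ℝ)) (fun _ => w)
      simpa using h
    set D1 := iteratedFDeriv ℝ 1 u c (fun _ => w) with hD1
    set D2 := iteratedFDeriv ℝ 2 u c (fun _ => w) with hD2
    set D3 := iteratedFDeriv ℝ 3 u c (fun _ => w) with hD3
    rw [hcw, hux] at B1
    rw [hcw', huy, hneg 1, hneg 2, hneg 3, norm_neg] at B2
    have hcΩ : c ∈ Ω := by
      have := (hmem 0 (by norm_num)).1
      simpa using this
    have hD2ge : ε * ‖w‖^2 ≤ D2 := by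
      have hnwpos : (0:ℝ) < ‖w‖ := norm_pos_iff.mpr hw0
      set v := ‖w‖⁻¹ • w with hv
      have hnv : ‖v‖ = 1 := by
        rw [hv, norm_smul, norm_inv, norm_norm]
        field_simp
      have hperp' : ⟪gradient u c, v⟫ = 0 := by
        rw [hv, real_inner_smul_right]
        have h2 : ⟪gradient u c, w⟫ = 0 := by
          have h3 : ⟪gradient u c, x - y⟫ = 2 * ⟪gradient u c, w⟫ := by
            have : x - y = (2:ℝ) • w := by rw [hwdef]; module
            rw [this, real_inner_smul_right]
          rw [h3] at hperp
          linarith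
        rw [h2]; ring
      have h1 := hell c hcΩ v hnv hperp'
      have h2 : iteratedFDeriv ℝ 2 u c ![v, v] = iteratedFDeriv ℝ 2 u c (fun _ => v) := by
        congr 1
        funext i
        fin_cases i <;> rfl
      have h3 : D2 = ‖w‖^2 * iteratedFDeriv ℝ 2 u c (fun _ => v) := by
        have h4 := (iteratedFDeriv ℝ 2 u c).map_smul_univ (fun _ => ‖w‖) (fun _ => v)
        have h5 : (fun _ : Fin 2 => ‖w‖ • v) = fun _ : Fin 2 => w := by
          funext _
          rw [hv, smul_smul]
          field_simp
          simp
        rw [h5] at h4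
        rw [hD2, h4]
        simp [pow_two]
      rw [h3]
      rw [h2] at h1
      have : ε ≤ iteratedFDeriv ℝ 2 u c (fun _ => v) := h1
      nlinarith [sq_nonneg ‖w‖]
    have hKnn : (0:ℝ) ≤ K := le_trans (norm_nonneg _) (hK c hcΩ)
    have e1 := abs_le.mp B1
    have e2 := abs_le.mp B2
    have goal2 : u c ≤ α - ε * ‖w‖^2 / 2 + K / 6 * ‖w‖^4 := by
      obtain ⟨l1, r1⟩ := e1
      obtain ⟨l2, r2⟩ := e2
      nlinarith
    rw [← hnw] at *
    calc u c ≤ α - ε * ‖w‖^2 / 2 + K / 6 * ‖w‖^4 := goal2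
      _ = α - ε * ‖w‖ ^ 2 / 2 + K / 6 * ‖w‖ ^ 4 := by ring
end

section
/- Let Ω ⊂ ℝⁿ be convex and open. If u : Ω → ℝ is quasiconvex along every direction in a set D of unit vectors spanning all directions with directional resolution dθ = max_{|w|=1} min_{d∈D} arccos(wᵀd), and u(x) = xᵀAx + bᵀx is quadratic, then for every unit vector w with bᵀw = 0, wᵀAw ≥ −C·dθ for a constant C depending only on the largest eigenvalue of A and |b|, provided dθ ≤ π/4. -/
open Matrix Real

private lemma aux_quad_zero {β γ : ℝ} (h : ∀ t : ℝ, 0 ≤ 2 * t * β + t ^ 2 * γ) : β = 0 := by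
  by_contra hβ
  have h1 := h (-β / (|γ| + 1))
  have h3 : γ ≤ |γ| := le_abs_self γ
  have h4 : (0:ℝ) < |γ| + 1 := by positivity
  have hb : 0 < β ^ 2 := by positivity
  have h5 : (2 * (-β / (|γ| + 1)) * β + (-β / (|γ| + 1)) ^ 2 * γ) * (|γ| + 1) ^ 2
      = β ^ 2 * (γ - 2 * (|γ| + 1)) := by field_simp; ring
  nlinarith [mul_nonneg h1 (sq_nonneg (|γ| + 1))]


private lemma aux_mbound {lam m c s co : ℝ} (hlam0 : 0 ≤ lam)
    (hkey : 0 ≤ c ^ 2 * m + lam * (1 - c ^ 2)) (hccos : co ≤ c) (hcopos : 0 < co)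
    (hcohalf : (1:ℝ)/2 ≤ co ^ 2) (hpyth : s ^ 2 + co ^ 2 = 1) :
    -(2 * lam * s ^ 2) ≤ m := by
  rcases le_or_gt 0 m with hm0 | hm0
  · have hpos : 0 ≤ 2 * lam * s ^ 2 := by positivity
    linarith
  · have hc2 : co ^ 2 ≤ c ^ 2 := pow_le_pow_left₀ (le_of_lt hcopos) hccos 2
    have h1 : c ^ 2 * m ≤ co ^ 2 * m := mul_le_mul_of_nonpos_right hc2 (le_of_lt hm0)
    have h2 : 1 - c ^ 2 ≤ s ^ 2 := by linarith
    have h3 : lam * (1 - c ^ 2) ≤ lam * s ^ 2 := mul_le_mul_of_nonneg_left h2 hlam0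
    have h4 : 0 ≤ co ^ 2 * m + lam * s ^ 2 := by linarith
    have hco2pos : 0 < co ^ 2 := by positivity
    have h5 : 0 ≤ (2 * co ^ 2 - 1) * (lam * s ^ 2) :=
      mul_nonneg (by linarith) (mul_nonneg hlam0 (sq_nonneg _))
    nlinarith [h4, h5, hco2pos]


private lemma aux_final {lam s dθ q : ℝ} (hlam0 : 0 ≤ lam) (hs0 : 0 ≤ s) (hs1 : s ≤ 1)
    (hsd : s ≤ dθ) (hd0 : 0 ≤ dθ) (hq : 0 ≤ q) :
    -((lam * (s + 2) + q) * dθ) ≤ -(2 * lam * s ^ 2) := by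
  have t1 : lam * s * s ≤ lam * s * dθ := mul_le_mul_of_nonneg_left hsd (mul_nonneg hlam0 hs0)
  have t2 : lam * s ≤ lam * 2 := mul_le_mul_of_nonneg_left (by linarith) hlam0
  have t3 : lam * s * dθ ≤ lam * 2 * dθ := mul_le_mul_of_nonneg_right t2 hd0
  have t4 : 0 ≤ q * dθ := mul_nonneg hq hd0
  nlinarith [t1, t3, t4]

/-- Approximate quasiconvexity: if the quadratic u(x) = xᵀAx + bᵀx is quasiconvex
along every direction of a set D of unit vectors with directional resolution dθ ≤ π/4,
then wᵀAw ≥ -C·dθ for every unit w with bᵀw = 0, with C = λₙ(sin dθ + 2) + |b|. -/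
theorem stmt_18 (n : ℕ) (A : Matrix (Fin n) (Fin n) ℝ) (hA : A.IsSymm)
    (lam : ℝ) (hlam0 : 0 ≤ lam)
    (hlam : ∀ y : Fin n → ℝ, y ⬝ᵥ y = 1 → y ⬝ᵥ A.mulVec y ≤ lam)
    (b : Fin n → ℝ) (u : (Fin n → ℝ) → ℝ)
    (hu : u = fun x => x ⬝ᵥ A.mulVec x + b ⬝ᵥ x)
    (D : Set (Fin n → ℝ)) (hD : ∀ d ∈ D, d ⬝ᵥ d = 1)
    (hqc : ∀ d ∈ D, ∀ x : Fin n → ℝ, ∀ s r t : ℝ, 0 ≤ t → t ≤ 1 →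
      u (x + (t * s + (1 - t) * r) • d) ≤ max (u (x + s • d)) (u (x + r • d)))
    (dθ : ℝ) (hdθ0 : 0 ≤ dθ) (hdθ : dθ ≤ π / 4)
    (hres : ∀ w : Fin n → ℝ, w ⬝ᵥ w = 1 → ∃ d ∈ D, Real.arccos (w ⬝ᵥ d) ≤ dθ) :
    ∀ w : Fin n → ℝ, w ⬝ᵥ w = 1 → b ⬝ᵥ w = 0 →
      -((lam * (Real.sin dθ + 2) + Real.sqrt (b ⬝ᵥ b)) * dθ) ≤ w ⬝ᵥ A.mulVec w := by
  intro w hw hbw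
  -- symmetry of the bilinear form
  have hsymm : ∀ x y : Fin n → ℝ, x ⬝ᵥ A.mulVec y = y ⬝ᵥ A.mulVec x := by
    intro x y
    calc x ⬝ᵥ A.mulVec y = x ᵥ* A ⬝ᵥ y := dotProduct_mulVec x A y
      _ = (Aᵀ *ᵥ x) ⬝ᵥ y := by rw [Matrix.mulVec_transpose]
      _ = (A *ᵥ x) ⬝ᵥ y := by rw [hA.eq]
      _ = y ⬝ᵥ A.mulVec x := dotProduct_comm _ _
  -- dot product of a vector with itself is nonneg
  have hself : ∀ y : Fin n → ℝ, 0 ≤ y ⬝ᵥ y := fun y =>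
    Finset.sum_nonneg fun i _ => mul_self_nonneg _
  -- quadratic form bound for all vectors
  have hlam' : ∀ y : Fin n → ℝ, y ⬝ᵥ A.mulVec y ≤ lam * (y ⬝ᵥ y) := by
    intro y
    rcases eq_or_ne (y ⬝ᵥ y) 0 with h0 | h0
    · have : y = 0 := by
        by_contra hy
        exact hy ((dotProduct_self_eq_zero).mp h0)
      simp [this]
    · have hpos : 0 < y ⬝ᵥ y := lt_of_le_of_ne (hself y) (Ne.symm h0)
      set c := (Real.sqrt (y ⬝ᵥ y))⁻¹ with hc
      have hsq : c ^ 2 * (y ⬝ᵥ y) = 1 := by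
        rw [hc, ← Real.sqrt_inv]
        rw [Real.sq_sqrt (by positivity)]
        field_simp
      have h1 : (c • y) ⬝ᵥ (c • y) = 1 := by
        rw [smul_dotProduct, dotProduct_smul, smul_eq_mul, smul_eq_mul, ← hsq]; ring
      have h2 := hlam (c • y) h1
      rw [smul_dotProduct, Matrix.mulVec_smul, dotProduct_smul,
        smul_eq_mul, smul_eq_mul] at h2
      have hc2 : 0 < c ^ 2 := by
        rw [hc]; positivity
      have h2' : c ^ 2 * (y ⬝ᵥ A.mulVec y) ≤ lam := by rw [pow_two, mul_assoc]; exact h2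
      calc y ⬝ᵥ A.mulVec y = (c ^ 2 * (y ⬝ᵥ A.mulVec y)) * (y ⬝ᵥ y) := by
            linear_combination (y ⬝ᵥ A.mulVec y) * hsq.symm
        _ ≤ lam * (y ⬝ᵥ y) := mul_le_mul_of_nonneg_right h2' (hself y)
  -- Step A: quadratic form is nonnegative along directions in D
  have hposD : ∀ d ∈ D, 0 ≤ d ⬝ᵥ A.mulVec d := by
    intro d hd
    by_contra hneg
    push_neg at hneg
    set α := d ⬝ᵥ A.mulVec d with hα
    set β := b ⬝ᵥ d with hβ
    set T := (|β| + 1) / (-α) with hT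
    have hTpos : 0 < T := div_pos (by positivity) (by linarith)
    have hαne : -α ≠ 0 := ne_of_gt (by linarith)
    have hTα : T * α = -(|β| + 1) := by rw [hT, div_mul_eq_mul_div, div_eq_iff hαne]; ring
    have hval : ∀ s : ℝ, u ((0 : Fin n → ℝ) + s • d) = s ^ 2 * α + s * β := by
      intro s
      rw [hu]
      simp only [zero_add, smul_dotProduct, dotProduct_smul,
        Matrix.mulVec_smul, smul_eq_mul, ← hα, ← hβ]
      ring
    have key := hqc d hd 0 T (-T) (1/2) (by norm_num) (by norm_num)
    have harg : (1/2 : ℝ) * T + (1 - 1/2) * (-T) = 0 := by ring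
    rw [harg] at key
    have h0 : u ((0 : Fin n → ℝ) + (0:ℝ) • d) = 0 := by rw [hu]; simp
    rw [h0, hval T, hval (-T)] at key
    have hb1 : β ≤ |β| := le_abs_self β
    have hb2 : -|β| ≤ β := neg_abs_le β
    rcases le_max_iff.mp key with h | h
    · nlinarith
    · nlinarith
  -- Step B: minimizer of the quadratic form on the unit sphere
  have hScomp : ∃ w₀ : Fin n → ℝ, (w₀ ⬝ᵥ w₀ = 1) ∧
      ∀ y : Fin n → ℝ, y ⬝ᵥ y = 1 → w₀ ⬝ᵥ A.mulVec w₀ ≤ y ⬝ᵥ A.mulVec y := by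
    set S : Set (Fin n → ℝ) := {y | y ⬝ᵥ y = 1} with hS
    have hcontdot : Continuous fun y : Fin n → ℝ => y ⬝ᵥ y := by
      simp only [dotProduct]
      exact continuous_finset_sum _ fun i _ => (continuous_apply i).mul (continuous_apply i)
    have hcontf : Continuous fun y : Fin n → ℝ => y ⬝ᵥ A.mulVec y := by
      simp only [dotProduct, Matrix.mulVec]
      exact continuous_finset_sum _ fun i _ => (continuous_apply i).mul
        (continuous_finset_sum _ fun j _ => continuous_const.mul (continuous_apply j))
    have hclosed : IsClosed S := isClosed_eq hcontdot continuous_const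
    have hbdd : Bornology.IsBounded S := by
      rw [Metric.isBounded_iff_subset_closedBall 0]
      refine ⟨1, fun y hy => ?_⟩
      rw [Metric.mem_closedBall, dist_zero_right]
      rw [pi_norm_le_iff_of_nonneg (by norm_num)]
      intro i
      have h1 : y i * y i ≤ y ⬝ᵥ y :=
        Finset.single_le_sum (f := fun j => y j * y j)
          (fun j _ => mul_self_nonneg _) (Finset.mem_univ i)
      rw [hy] at h1
      exact abs_le_one_iff_mul_self_le_one.mpr h1
    have hcomp : IsCompact S := Metric.isCompact_of_isClosed_isBounded hclosed hbdd
    obtain ⟨w₀, hw₀S, hmin⟩ := hcomp.exists_isMinOn ⟨w, hw⟩ hcontf.continuousOn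
    exact ⟨w₀, hw₀S, fun y hy => hmin hy⟩
  obtain ⟨w₀, hw₀, hmin⟩ := hScomp
  set m := w₀ ⬝ᵥ A.mulVec w₀ with hm
  -- Step C: first-order optimality at the minimizer
  have hlagrange : ∀ e : Fin n → ℝ, w₀ ⬝ᵥ e = 0 → w₀ ⬝ᵥ A.mulVec e = 0 := by
    intro e he
    apply aux_quad_zero (γ := e ⬝ᵥ A.mulVec e - m * (e ⬝ᵥ e))
    intro t
    set ρ := 1 + t ^ 2 * (e ⬝ᵥ e) with hρ
    have hρpos : 0 < ρ := by nlinarith [hself e, sq_nonneg t]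
    set c := (Real.sqrt ρ)⁻¹ with hc
    have hc2 : c ^ 2 * ρ = 1 := by
      rw [hc, ← Real.sqrt_inv, Real.sq_sqrt (by positivity)]
      field_simp
    have hew : e ⬝ᵥ w₀ = 0 := by rw [dotProduct_comm]; exact he
    have hvv : (w₀ + t • e) ⬝ᵥ (w₀ + t • e) = ρ := by
      simp only [add_dotProduct, dotProduct_add, smul_dotProduct,
        dotProduct_smul, smul_eq_mul, hw₀, he, hew, hρ]
      ring
    have hyy : (c • (w₀ + t • e)) ⬝ᵥ (c • (w₀ + t • e)) = 1 := by
      rw [smul_dotProduct, dotProduct_smul, hvv, smul_eq_mul, smul_eq_mul,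
        ← hc2]
      ring
    have h1 := hmin _ hyy
    have hq : (w₀ + t • e) ⬝ᵥ A.mulVec (w₀ + t • e)
        = m + 2 * t * (w₀ ⬝ᵥ A.mulVec e) + t ^ 2 * (e ⬝ᵥ A.mulVec e) := by
      simp only [add_dotProduct, dotProduct_add, smul_dotProduct,
        dotProduct_smul, Matrix.mulVec_add, Matrix.mulVec_smul, smul_eq_mul,
        hsymm e w₀, ← hm]
      ring
    have h2 : (c • (w₀ + t • e)) ⬝ᵥ A.mulVec (c • (w₀ + t • e))
        = c ^ 2 * ((w₀ + t • e) ⬝ᵥ A.mulVec (w₀ + t • e)) := by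
      rw [smul_dotProduct, Matrix.mulVec_smul, dotProduct_smul,
        smul_eq_mul, smul_eq_mul]
      ring
    rw [h2, hq] at h1
    -- h1 : m ≤ c^2 * (m + 2 t β + t² eAe);  multiply by ρ > 0
    have h3 : m * ρ ≤ m + 2 * t * (w₀ ⬝ᵥ A.mulVec e) + t ^ 2 * (e ⬝ᵥ A.mulVec e) := by
      have h4 := mul_le_mul_of_nonneg_right h1 (le_of_lt hρpos)
      calc m * ρ ≤ c ^ 2 * (m + 2 * t * (w₀ ⬝ᵥ A.mulVec e) + t ^ 2 * (e ⬝ᵥ A.mulVec e)) * ρ :=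
            h4
        _ = (c ^ 2 * ρ) * (m + 2 * t * (w₀ ⬝ᵥ A.mulVec e) + t ^ 2 * (e ⬝ᵥ A.mulVec e)) := by
            ring
        _ = _ := by rw [hc2]; ring
    rw [hρ] at h3
    nlinarith [h3]
  -- Step D: bound on m using a nearby direction from D
  obtain ⟨d, hdD, hdnear⟩ := hres w₀ hw₀
  set cθ := w₀ ⬝ᵥ d with hcθ
  have hdw : d ⬝ᵥ w₀ = cθ := by rw [dotProduct_comm]
  have hdd : d ⬝ᵥ d = 1 := hD d hdD
  have hc_le : cθ ≤ 1 := by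
    have h1 : 0 ≤ (w₀ - d) ⬝ᵥ (w₀ - d) := hself _
    simp only [sub_dotProduct, dotProduct_sub, hw₀, hdd, ← hcθ, hdw] at h1
    linarith
  have hc_ge : -1 ≤ cθ := by
    have h1 : 0 ≤ (w₀ + d) ⬝ᵥ (w₀ + d) := hself _
    simp only [add_dotProduct, dotProduct_add, hw₀, hdd, ← hcθ, hdw] at h1
    linarith
  have hπ : dθ ≤ π := by linarith [Real.pi_pos]
  have hccos : Real.cos dθ ≤ cθ := by
    have h1 := Real.cos_le_cos_of_nonneg_of_le_pi (Real.arccos_nonneg _) hπ hdnear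
    rwa [Real.cos_arccos hc_ge hc_le] at h1
  have hcosθ4 : Real.sqrt 2 / 2 ≤ Real.cos dθ := by
    have h1 := Real.cos_le_cos_of_nonneg_of_le_pi hdθ0 (by linarith [Real.pi_pos]) hdθ
    rwa [Real.cos_pi_div_four] at h1
  have hcos_half : (1:ℝ)/2 ≤ Real.cos dθ ^ 2 := by
    have h2 : (Real.sqrt 2 / 2) ^ 2 = 1/2 := by
      rw [div_pow, Real.sq_sqrt (by norm_num : (0:ℝ) ≤ 2)]; norm_num
    have h3 : 0 ≤ Real.sqrt 2 / 2 := by positivity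
    nlinarith
  have hcospos : 0 < Real.cos dθ := by
    have : (0:ℝ) < Real.sqrt 2 / 2 := by positivity
    linarith
  set e := d - cθ • w₀ with heq
  have he : w₀ ⬝ᵥ e = 0 := by
    simp only [heq, dotProduct_sub, dotProduct_smul, smul_eq_mul, ← hcθ, hw₀]
    ring
  have hee : e ⬝ᵥ e = 1 - cθ ^ 2 := by
    simp only [heq, sub_dotProduct, dotProduct_sub, smul_dotProduct,
      dotProduct_smul, smul_eq_mul, hw₀, hdd, ← hcθ, hdw]
    ring
  have hd' : d = cθ • w₀ + e := by rw [heq]; abel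
  have hcross := hlagrange e he
  have hcross' : e ⬝ᵥ A.mulVec w₀ = 0 := by rw [hsymm]; exact hcross
  have hdAd : d ⬝ᵥ A.mulVec d = cθ ^ 2 * m + e ⬝ᵥ A.mulVec e := by
    rw [hd']
    simp only [add_dotProduct, dotProduct_add, smul_dotProduct,
      dotProduct_smul, Matrix.mulVec_add, Matrix.mulVec_smul, smul_eq_mul,
      hcross, hcross', ← hm]
    ring
  have h0d := hposD d hdD
  have heAe : e ⬝ᵥ A.mulVec e ≤ lam * (1 - cθ ^ 2) := by
    have := hlam' e
    rwa [hee] at this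
  -- key inequality : 0 ≤ cθ² m + lam (1 - cθ²)
  have hkey : 0 ≤ cθ ^ 2 * m + lam * (1 - cθ ^ 2) := by
    rw [hdAd] at h0d
    linarith
  -- m ≥ -2 lam sin² dθ
  have hsin0 : 0 ≤ Real.sin dθ := Real.sin_nonneg_of_nonneg_of_le_pi hdθ0 hπ
  have hsindθ : Real.sin dθ ≤ dθ := Real.sin_le hdθ0
  have hsin1 : Real.sin dθ ≤ 1 := Real.sin_le_one _
  have hpyth : Real.sin dθ ^ 2 + Real.cos dθ ^ 2 = 1 := Real.sin_sq_add_cos_sq dθ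
  have hmbound : -(2 * lam * Real.sin dθ ^ 2) ≤ m :=
    aux_mbound hlam0 hkey hccos hcospos hcos_half hpyth
  -- Step E: conclude
  have hmw := hmin w hw
  have hsqrtb : 0 ≤ Real.sqrt (b ⬝ᵥ b) := Real.sqrt_nonneg _
  have hfinal : -((lam * (Real.sin dθ + 2) + Real.sqrt (b ⬝ᵥ b)) * dθ)
      ≤ -(2 * lam * Real.sin dθ ^ 2) :=
    aux_final hlam0 hsin0 hsin1 hsindθ hdθ0 hsqrtb
  linarith
end
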